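/- arXiv:2011.06202 — 3 statements merged into one kernel-verified Lean document; each statement's English description precedes it below -/
import Mathlib

section
/- Lower bound on the flattened Laplace normalizer: with C > 1/4 and m ∈ [-R - r/2, R + r/2], the integral Z = ∫_{-R-4Cr}^{R+4Cr} exp(-(ε/4)·min{(Ln/(3C))·|m - ω|, Lrn}) dω satisfies Z ≥ (12C/(nεL))·(1 - exp(-(nεL/(12C))·min{3Cr, R + r})). -/
open Real intervalIntegral

lemma aux_exp_int (a M : ℝ) (ha : a ≠ 0) :
    ∫ t in (0:ℝ)..M, Real.exp (-a * t) = (1/a) * (1 - Real.exp (-a * M)) := by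
  have h := intervalIntegral.integral_comp_mul_left (fun x => Real.exp x)
      (c := -a) (a := 0) (b := M) (neg_ne_zero.mpr ha)
  simp only [mul_zero, integral_exp, Real.exp_zero, smul_eq_mul] at h
  rw [h, inv_neg, one_div]
  ring

theorem stmt_7 (L R r ε C m : ℝ) (n : ℕ) (hL : 0 < L) (hR : 0 < R) (hr : 0 < r)
    (hLr : L * r ≤ 1/2) (hε : 0 < ε) (hn : 0 < n) (hC : 1/4 < C) (hm : |m| ≤ R + r/2) :
    (12*C/(n*ε*L)) * (1 - Real.exp (-(n*ε*L/(12*C)) * min (3*C*r) (R + r)))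
      ≤ ∫ ω in (-(R + 4*C*r))..(R + 4*C*r),
          Real.exp (-(ε/4) * min (L * n / (3*C) * |m - ω|) (L * r * n)) := by
  have hC0 : (0:ℝ) < C := lt_trans (by norm_num) hC
  have hn' : (0:ℝ) < n := by exact_mod_cast hn
  set a : ℝ := n*ε*L/(12*C) with ha_def
  have ha : 0 < a := by positivity
  set M : ℝ := min (3*C*r) (R+r) with hM_def
  have hM : 0 < M := lt_min (by positivity) (by positivity)
  have hM3 : M ≤ 3*C*r := min_le_left _ _
  have hMR : M ≤ R + r := min_le_right _ _
  have hm1 : -(R + r/2) ≤ m := neg_le_of_abs_le hm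
  have hm2 : m ≤ R + r/2 := le_of_abs_le hm
  have hfun : ∀ ω : ℝ, (-(ε/4) * min (L * ↑n / (3*C) * |m - ω|) (L * r * ↑n))
      = -(a * min (|m - ω|) (3*C*r)) := by
    intro ω
    have h1 : a * min (|m - ω|) (3*C*r) = min (a * |m - ω|) (a * (3*C*r)) :=
      mul_min_of_nonneg _ _ ha.le
    have h2 : a * |m - ω| = (ε/4) * (L * ↑n / (3*C) * |m - ω|) := by
      rw [ha_def]; field_simp; try ring
    have h3 : a * (3*C*r) = (ε/4) * (L * r * ↑n) := by
      rw [ha_def]; field_simp; try ring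
    rw [h1, h2, h3, ← mul_min_of_nonneg _ _ (by positivity : (0:ℝ) ≤ ε/4)]
    ring
  have hcont : Continuous fun ω : ℝ =>
      Real.exp (-(ε/4) * min (L * ↑n / (3*C) * |m - ω|) (L * r * ↑n)) := by
    apply Real.continuous_exp.comp
    apply Continuous.mul continuous_const
    exact Continuous.min (continuous_const.mul ((continuous_const.sub continuous_id).abs))
      continuous_const
  have hRHS : 12*C/(↑n*ε*L) = 1/a := by rw [ha_def]; field_simp
  have hRexp : -(↑n*ε*L/(12*C)) * min (3*C*r) (R + r) = -a * M := by
    rw [ha_def, hM_def]; try ring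
  rw [hRHS, hRexp, ← aux_exp_int a M ha.ne']
  have hCr : r ≤ 4*C*r := by nlinarith
  have hCr2 : r/2 ≤ 4*C*r := by nlinarith
  rcases le_or_gt m 0 with hm0 | hm0
  · -- use [m, m+M]
    have key : ∫ t in (0:ℝ)..M, Real.exp (-a * t)
        = ∫ ω in m..(m+M), Real.exp (-(ε/4) * min (L * ↑n / (3*C) * |m - ω|) (L * r * ↑n)) := by
      have : ∫ ω in m..(m+M), Real.exp (-(ε/4) * min (L * ↑n / (3*C) * |m - ω|) (L * r * ↑n))
          = ∫ ω in m..(m+M), Real.exp (-a * (ω - m)) := by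
        apply intervalIntegral.integral_congr
        intro ω hω
        rw [Set.uIcc_of_le (by linarith : m ≤ m + M)] at hω
        have h1 : |m - ω| = ω - m := by
          rw [abs_sub_comm]; exact abs_of_nonneg (by linarith [hω.1])
        have h2 : min (|m - ω|) (3*C*r) = |m - ω| :=
          min_eq_left (by rw [h1]; linarith [hω.2])
        have h3 : (-(ε/4) * min (L * ↑n / (3*C) * |m - ω|) (L * r * ↑n)) = -a * (ω - m) := by
          rw [hfun, h2, h1]; ring
        simp only [h3]
      rw [this, intervalIntegral.integral_comp_sub_right (fun t => Real.exp (-a * t)) m]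
      simp
    rw [key]
    apply intervalIntegral.integral_mono_interval (by linarith) (by linarith) (by linarith)
    · filter_upwards with x using (Real.exp_pos _).le
    · exact hcont.intervalIntegrable _ _
  · -- use [m-M, m]
    have key : ∫ t in (0:ℝ)..M, Real.exp (-a * t)
        = ∫ ω in (m-M)..m, Real.exp (-(ε/4) * min (L * ↑n / (3*C) * |m - ω|) (L * r * ↑n)) := by
      have : ∫ ω in (m-M)..m, Real.exp (-(ε/4) * min (L * ↑n / (3*C) * |m - ω|) (L * r * ↑n))
          = ∫ ω in (m-M)..m, Real.exp (-a * (m - ω)) := by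
        apply intervalIntegral.integral_congr
        intro ω hω
        rw [Set.uIcc_of_le (by linarith : m - M ≤ m)] at hω
        have h1 : |m - ω| = m - ω := abs_of_nonneg (by linarith [hω.2])
        have h2 : min (|m - ω|) (3*C*r) = |m - ω| :=
          min_eq_left (by rw [h1]; linarith [hω.1])
        have h3 : (-(ε/4) * min (L * ↑n / (3*C) * |m - ω|) (L * r * ↑n)) = -a * (m - ω) := by
          rw [hfun, h2, h1]; ring
        simp only [h3]
      rw [this, intervalIntegral.integral_comp_sub_left (fun t => Real.exp (-a * t)) m]
      simp
    rw [key]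
    apply intervalIntegral.integral_mono_interval (by linarith) (by linarith) (by linarith)
    · filter_upwards with x using (Real.exp_pos _).le
    · exact hcont.intervalIntegrable _ _
end

section
/- Adding M new data points to a data set can move the left empirical median only to one of the ⌊M/2⌋ + 1 order statistics immediately to the left or right of the original median: formally, if Y is obtained from an n-point multiset X by adding M points, then m(X ∪ new points) lies between the (ℓ - ⌊M/2⌋ - 1)-th and (ℓ + ⌊M/2⌋ + 1)-th order statistics of X, where ℓ = ⌊n/2⌋ and m denotes the left median. -/
/-!
The sorted list of `X` is a sublist of the sorted list of `X + A`. Its embedding is a strictly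
monotone map `Fin n → Fin (n + M)`, which sends each index `i` into `[i, i + M]`; hence the
`i`-th order statistic of `X` lies between the `i`-th and the `(i + M)`-th order statistics of
`X + A`. The median index `⌊(n + M)/2⌋ - 1` of `X + A` is squeezed between these positions for
the two indices of the statement.
-/

/-- The left median of a multiset of reals: its `⌊card/2⌋`-th smallest element (1-indexed). -/
noncomputable def multisetLeftMedian (S : Multiset ℝ) : ℝ :=
  (S.sort (· ≤ ·)).getD (S.card / 2 - 1) 0

namespace Fin

variable {n m : ℕ} {f : Fin n → Fin m}

theorem val_le_val_apply_of_strictMono (hf : StrictMono f) (i : Fin n) : (i : ℕ) ≤ f i := by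
  simpa using Finset.card_le_card_of_injOn f (s := Finset.Iio i) (t := Finset.Iio (f i))
    (fun j hj => by simpa using hf (by simpa using hj)) hf.injective.injOn

theorem val_apply_le_add_of_strictMono (hf : StrictMono f) (i : Fin n) :
    (f i : ℕ) ≤ i + (m - n) := by
  have := Finset.card_le_card_of_injOn f (s := Finset.Ioi i) (t := Finset.Ioi (f i))
    (fun j hj => by simpa using hf (by simpa using hj)) hf.injective.injOn
  simp only [Fin.card_Ioi] at this
  omega

end Fin

namespace List

variable {α : Type*} [Preorder α] {l₁ l₂ : List α}

theorem Sublist.getElem_le_getElem_of_sortedLE (h : l₁ <+ l₂) (hl₂ : l₂.SortedLE) {i : ℕ}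
    (hi : i < l₁.length) : l₂[i]'(hi.trans_le h.length_le) ≤ l₁[i] := by
  obtain ⟨f, hf⟩ := sublist_iff_exists_fin_orderEmbedding_get_eq.mp h
  rw [← get_eq_getElem (l := l₁) (i := ⟨i, hi⟩), hf]
  exact hl₂.getElem_le_getElem_of_le (Fin.val_le_val_apply_of_strictMono f.strictMono ⟨i, hi⟩)

theorem Sublist.getElem_le_getElem_add_of_sortedLE (h : l₁ <+ l₂) (hl₂ : l₂.SortedLE) {i : ℕ}
    (hi : i < l₁.length) :
    l₁[i] ≤ l₂[i + (l₂.length - l₁.length)]'(by have := h.length_le; omega) := by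
  obtain ⟨f, hf⟩ := sublist_iff_exists_fin_orderEmbedding_get_eq.mp h
  rw [← get_eq_getElem (l := l₁) (i := ⟨i, hi⟩), hf]
  exact hl₂.getElem_le_getElem_of_le (Fin.val_apply_le_add_of_strictMono f.strictMono ⟨i, hi⟩)

end List

namespace Multiset

variable {α : Type*} [LinearOrder α]

theorem sortedLE_sort (s : Multiset α) : (s.sort (· ≤ ·)).SortedLE :=
  (pairwise_sort s _).sortedLE

theorem sort_sublist_sort_of_le {s t : Multiset α} (h : s ≤ t) :
    (s.sort (· ≤ ·)).Sublist (t.sort (· ≤ ·)) := by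
  refine List.sublist_of_subperm_of_sortedLE ?_ (sortedLE_sort s) (sortedLE_sort t)
  rwa [← Multiset.coe_le, sort_eq, sort_eq]

end Multiset

theorem stmt_9 (X A : Multiset ℝ) (n M : ℕ) (hn : X.card = n) (hM : A.card = M)
    (h1 : M / 2 + 2 ≤ n / 2) (h2 : n / 2 + M / 2 + 1 ≤ n) :
    (X.sort (· ≤ ·)).getD (n / 2 - M / 2 - 2) 0 ≤ multisetLeftMedian (X + A) ∧
    multisetLeftMedian (X + A) ≤ (X.sort (· ≤ ·)).getD (n / 2 + M / 2) 0 := by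
  set L := X.sort (· ≤ ·)
  set T := (X + A).sort (· ≤ ·)
  have hL : L.length = n := by simp [L, hn]
  have hT : T.length = n + M := by simp [T, hn, hM]
  have hsub : L.Sublist T := Multiset.sort_sublist_sort_of_le (Multiset.le_add_right X A)
  have hTs : T.SortedLE := Multiset.sortedLE_sort _
  have hmed : multisetLeftMedian (X + A) = T[(n + M) / 2 - 1]'(by omega) := by
    rw [multisetLeftMedian, Multiset.card_add, hn, hM]
    exact List.getD_eq_getElem _ _ _
  rw [hmed, List.getD_eq_getElem _ _ (by omega), List.getD_eq_getElem _ _ (by omega)]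
  constructor
  · calc L[n / 2 - M / 2 - 2]
        ≤ T[n / 2 - M / 2 - 2 + (T.length - L.length)]'(by omega) :=
          hsub.getElem_le_getElem_add_of_sortedLE hTs _
      _ ≤ T[(n + M) / 2 - 1] := hTs.getElem_le_getElem_of_le (by omega)
  · calc T[(n + M) / 2 - 1]
        ≤ T[n / 2 + M / 2]'(by omega) := hTs.getElem_le_getElem_of_le (by omega)
      _ ≤ L[n / 2 + M / 2] := hsub.getElem_le_getElem_of_sortedLE hTs _
end

section
/- For the median m(D) of an admissible distribution D (density at least L on [m(D)-r, m(D)+r]), the empirical left median m(X) of n i.i.d. samples satisfies P(|m(X) - m(D)| ≥ t) ≤ 2·exp(-n·L²·t²/2) for all t ∈ [0, r]. -/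
/-!
Let `ε = L t`. The density bound puts mass at least `ε` on each of `(m - t, m)` and
`(m, m + t)`, so each tail `(-∞, m - t]` and `[m + t, ∞)` has probability at most `1/2 - ε`.
If `|m(X) - m| ≥ t`, then at least `⌊n/2⌋` samples fall in one of these tails, whereas on
average at most `n (1/2 - ε)` do. Hoeffding's inequality for the indicator counts bounds each
event by `exp (-n ε² / 2)`, once `n ε ≥ 1`; for `n ε < 1` the right-hand side exceeds `1`.
-/

open MeasureTheory ProbabilityTheory

/-- The left empirical median: the `⌊n/2⌋`-th smallest coordinate (1-indexed). -/
noncomputable def leftMedian {n : ℕ} (X : Fin n → ℝ) : ℝ :=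
  (List.insertionSort (· ≤ ·) (List.ofFn X)).getD (n / 2 - 1) 0

open Finset Real

theorem List.Pairwise.apply_getElem_iff_lt_countP {α : Type*} [Preorder α] {l : List α}
    (hl : l.Pairwise (· ≤ ·)) {q : α → Prop} [DecidablePred q] (hq : Antitone q) {k : ℕ}
    (hk : k < l.length) : q l[k] ↔ k < l.countP q := by
  have hle : ∀ i j (hi : i < l.length) (hj : j < l.length), i ≤ j → l[i] ≤ l[j] := by
    intro i j hi hj hij
    rcases hij.lt_or_eq with hij | rfl
    · exact List.pairwise_iff_getElem.1 hl i j hi hj hij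
    · exact le_rfl
  constructor
  · intro hqk
    have hprefix : (l.take (k + 1)).countP q = k + 1 := by
      rw [List.countP_eq_length.2, List.length_take, min_eq_left hk]
      intro a ha
      obtain ⟨i, hi, rfl⟩ := List.mem_iff_getElem.1 ha
      rw [List.length_take] at hi
      rw [List.getElem_take]
      exact decide_eq_true (hq (hle i k (by omega) hk (by omega)) hqk)
    have := (List.take_sublist (k + 1) l).countP_le (p := fun a => Decidable.decide (q a))
    omega
  · intro hcount
    by_contra hqk
    have hsuffix : (l.drop k).countP q = 0 := by
      rw [List.countP_eq_zero]
      intro a ha hqa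
      obtain ⟨i, hi, rfl⟩ := List.mem_iff_getElem.1 ha
      rw [List.length_drop] at hi
      rw [List.getElem_drop] at hqa
      exact hqk (hq (hle k (k + i) hk (by omega) (by omega)) (by simpa using hqa))
    have hsplit := List.countP_append (p := fun a => Decidable.decide (q a))
      (l₁ := l.take k) (l₂ := l.drop k)
    rw [List.take_append_drop] at hsplit
    have := (l.take k).countP_le_length (p := fun a => Decidable.decide (q a))
    rw [List.length_take] at this
    omega

theorem List.countP_ofFn {α : Type*} {n : ℕ} (x : Fin n → α) (q : α → Prop)
    [DecidablePred q] :
    (List.ofFn x).countP q = #{i | q (x i)} := by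
  rw [← Multiset.coe_countP, ← Fin.univ_val_map, Multiset.countP_map]
  rfl

section leftMedian

variable {n : ℕ} (x : Fin n → ℝ)

theorem apply_leftMedian_iff (hn : 2 ≤ n) {q : ℝ → Prop} [DecidablePred q] (hq : Antitone q) :
    q (leftMedian x) ↔ n / 2 ≤ #{i | q (x i)} := by
  set l := List.insertionSort (· ≤ ·) (List.ofFn x)
  have hk : n / 2 - 1 < l.length := by
    rw [List.length_insertionSort, List.length_ofFn]; omega
  rw [leftMedian, List.getD_eq_getElem _ _ hk,
    (List.pairwise_insertionSort _ _).apply_getElem_iff_lt_countP hq hk,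
    (List.perm_insertionSort _ _).countP_eq, List.countP_ofFn]
  omega

theorem leftMedian_le_iff (hn : 2 ≤ n) {a : ℝ} :
    leftMedian x ≤ a ↔ n / 2 ≤ #{i | x i ≤ a} :=
  apply_leftMedian_iff x hn fun _ _ h hy => h.trans hy

theorem le_leftMedian_iff (hn : 2 ≤ n) {a : ℝ} :
    a ≤ leftMedian x ↔ n - n / 2 < #{i | a ≤ x i} := by
  have hsplit := card_filter_add_card_filter_not (s := univ) fun i => x i < a
  simp only [not_lt, card_univ, Fintype.card_fin] at hsplit
  rw [← not_lt, apply_leftMedian_iff x hn fun _ _ h hy => h.trans_lt hy]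
  omega

theorem half_le_card_of_le_abs_leftMedian_sub (hn : 2 ≤ n) {m t : ℝ}
    (h : t ≤ |leftMedian x - m|) :
    n / 2 ≤ #{i | x i ≤ m - t} ∨ n / 2 ≤ #{i | m + t ≤ x i} := by
  rcases le_abs'.1 h with h | h
  · exact Or.inl ((leftMedian_le_iff x hn).1 (by linarith))
  · have := (le_leftMedian_iff x hn (a := m + t)).1 (by linarith)
    exact Or.inr (by omega)

end leftMedian

theorem ProbabilityTheory.measureReal_card_ge_le {Ω ι α : Type*} [Fintype ι]
    [MeasurableSpace Ω] [MeasurableSpace α] {μ : Measure Ω} [IsProbabilityMeasure μ]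
    {X : ι → Ω → α} (hX : ∀ i, Measurable (X i)) (hindep : iIndepFun X μ) {A : Set α}
    [DecidablePred (· ∈ A)] (hA : MeasurableSet A) {p d : ℝ} (hp : ∀ i, μ.real (X i ⁻¹' A) ≤ p)
    (hd : 0 ≤ d) :
    μ.real {ω | Fintype.card ι * p + d ≤ #{i | X i ω ∈ A}}
      ≤ exp (-2 * d ^ 2 / Fintype.card ι) := by
  set Z : ι → Ω → ℝ := fun i => (X i ⁻¹' A).indicator 1
  have hZmeas : ∀ i, Measurable (Z i) := fun i => (measurable_one.indicator hA).comp (hX i)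
  have hmean : ∀ i, μ[Z i] = μ.real (X i ⁻¹' A) := fun i => integral_indicator_one (hX i hA)
  have hsubG : ∀ i ∈ (univ : Finset ι),
      HasSubgaussianMGF (fun ω => Z i ω - μ[Z i]) ((‖(1 : ℝ) - 0‖₊ / 2) ^ 2) μ := by
    intro i _
    refine hasSubgaussianMGF_of_mem_Icc (hZmeas i).aemeasurable (ae_of_all _ fun ω => ?_)
    by_cases h : X i ω ∈ A <;> simp [Z, h]
  have hindep' : iIndepFun (fun i ω => Z i ω - μ[Z i]) μ := by
    have h := hindep.comp (fun i (x : α) => A.indicator (1 : α → ℝ) x - μ[Z i])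
      fun i => (measurable_one.indicator hA).sub_const _
    exact h
  refine (measureReal_mono fun ω hω => ?_).trans
    ((HasSubgaussianMGF.measure_sum_ge_le_of_iIndepFun hindep' hsubG hd).trans_eq ?_)
  · simp only [Set.mem_ofPred_eq, hmean, Finset.sum_sub_distrib] at hω ⊢
    have hcount : ∑ i, Z i ω = #{i | X i ω ∈ A} := by
      rw [card_filter, Nat.cast_sum]
      refine sum_congr rfl fun i _ => ?_
      by_cases h : X i ω ∈ A <;> simp [Z, h]
    have := Finset.sum_le_sum fun i (_ : i ∈ Finset.univ) => hp i
    simp only [sum_const, card_univ, nsmul_eq_mul] at this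
    linarith
  · congr 1
    simp only [sub_zero, nnnorm_one, one_div, inv_pow, sum_const, card_univ, nsmul_eq_mul,
      NNReal.coe_mul, NNReal.coe_natCast, NNReal.coe_inv, NNReal.coe_pow, NNReal.coe_ofNat,
      neg_mul]
    field_simp

theorem mul_sub_le_measureReal_Ioo {D : Measure ℝ} [IsFiniteMeasure D] {L : ℝ} {s : Set ℝ}
    (hL : 0 ≤ L)
    (hdens : ∀ S : Set ℝ, MeasurableSet S → S ⊆ s → ENNReal.ofReal L * volume S ≤ D S)
    {a b : ℝ} (hab : Set.Ioo a b ⊆ s) : L * (b - a) ≤ D.real (Set.Ioo a b) := by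
  have h := hdens _ measurableSet_Ioo hab
  rwa [Real.volume_Ioo, ← ENNReal.ofReal_mul hL,
    ENNReal.ofReal_le_iff_le_toReal (measure_ne_top _ _)] at h

section Tails

variable {D : Measure ℝ} [IsProbabilityMeasure D] {m : ℝ}

theorem measureReal_Iic_le_of_half_le (hm : 1 / 2 ≤ D (Set.Ici m)) {a : ℝ} (ha : a < m) :
    D.real (Set.Iic a) ≤ 1 / 2 - D.real (Set.Ioo a m) := by
  have hunion : D.real (Set.Iic a) + D.real (Set.Ioo a m) = 1 - D.real (Set.Ici m) := by
    rw [← measureReal_union ((Set.Iic_disjoint_Ioi le_rfl).mono_right Set.Ioo_subset_Ioi_self)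
      measurableSet_Ioo, Set.Iic_union_Ioo_eq_Iio ha, ← Set.compl_Ici,
      measureReal_compl measurableSet_Ici, probReal_univ]
  have hhalf : 1 / 2 ≤ D.real (Set.Ici m) := by
    rw [measureReal_def, ← ENNReal.ofReal_le_iff_le_toReal (measure_ne_top _ _)]
    simpa using hm
  linarith

theorem measureReal_Ici_le_of_half_le (hm : 1 / 2 ≤ D (Set.Iic m)) {b : ℝ} (hb : m < b) :
    D.real (Set.Ici b) ≤ 1 / 2 - D.real (Set.Ioo m b) := by
  have hunion : D.real (Set.Ioo m b) + D.real (Set.Ici b) = 1 - D.real (Set.Iic m) := by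
    rw [← measureReal_union ((Set.Iio_disjoint_Ici le_rfl).mono_left Set.Ioo_subset_Iio_self)
      measurableSet_Ici, Set.Ioo_union_Ici_eq_Ioi hb, ← Set.compl_Iic,
      measureReal_compl measurableSet_Iic, probReal_univ]
  have hhalf : 1 / 2 ≤ D.real (Set.Iic m) := by
    rw [measureReal_def, ← ENNReal.ofReal_le_iff_le_toReal (measure_ne_top _ _)]
    simpa using hm
  linarith

variable {L r t : ℝ}

theorem measureReal_Iic_sub_le (hL : 0 ≤ L)
    (hdens : ∀ S : Set ℝ, MeasurableSet S → S ⊆ Set.Icc (m - r) (m + r) →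
      ENNReal.ofReal L * volume S ≤ D S)
    (hm : 1 / 2 ≤ D (Set.Ici m)) (ht : 0 < t) (htr : t ≤ r) :
    D.real (Set.Iic (m - t)) ≤ 1 / 2 - L * t := by
  have h := mul_sub_le_measureReal_Ioo hL hdens (a := m - t) (b := m)
    fun x hx => ⟨by linarith [hx.1], by linarith [hx.2]⟩
  rw [sub_sub_cancel] at h
  linarith [measureReal_Iic_le_of_half_le hm (a := m - t) (by linarith)]

theorem measureReal_Ici_add_le (hL : 0 ≤ L)
    (hdens : ∀ S : Set ℝ, MeasurableSet S → S ⊆ Set.Icc (m - r) (m + r) →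
      ENNReal.ofReal L * volume S ≤ D S)
    (hm : 1 / 2 ≤ D (Set.Iic m)) (ht : 0 < t) (htr : t ≤ r) :
    D.real (Set.Ici (m + t)) ≤ 1 / 2 - L * t := by
  have h := mul_sub_le_measureReal_Ioo hL hdens (a := m) (b := m + t)
    fun x hx => ⟨by linarith [hx.1], by linarith [hx.2]⟩
  rw [add_sub_cancel_left] at h
  linarith [measureReal_Ici_le_of_half_le hm (b := m + t) (by linarith)]

end Tails

theorem ProbabilityTheory.measureReal_half_le_card_le {Ω α : Type*} [MeasurableSpace Ω]
    [MeasurableSpace α] {μ : Measure Ω} [IsProbabilityMeasure μ] {n : ℕ}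
    {X : Fin n → Ω → α}
    (hX : ∀ i, Measurable (X i)) (hindep : iIndepFun X μ) {D : Measure α}
    (hlaw : ∀ i, μ.map (X i) = D) {A : Set α} [DecidablePred (· ∈ A)] (hA : MeasurableSet A)
    {ε : ℝ} (hDA : D.real A ≤ 1 / 2 - ε) (hε : 1 ≤ n * ε) :
    μ.real {ω | n / 2 ≤ #{i | X i ω ∈ A}} ≤ exp (-(n * ε ^ 2) / 2) := by
  have hp : ∀ i, μ.real (X i ⁻¹' A) ≤ 1 / 2 - ε := fun i => by
    rwa [← map_measureReal_apply (hX i) hA, hlaw i]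
  have hn : (n : ℝ) ≠ 0 := by rintro hn; rw [hn, zero_mul] at hε; linarith
  -- Half of the margin `n ε` goes to Hoeffding, the other half absorbs the rounding of `n / 2`.
  have h := measureReal_card_ge_le hX hindep hA hp (d := n * ε / 2) (by linarith)
  rw [Fintype.card_fin] at h
  refine (measureReal_mono fun ω hω => ?_).trans (h.trans_eq ?_)
  · have hhalf : (n : ℝ) ≤ 2 * (n / 2 : ℕ) + 1 := by
      exact_mod_cast (by omega : n ≤ 2 * (n / 2) + 1)
    have hcount : ((n / 2 : ℕ) : ℝ) ≤ #{i | X i ω ∈ A} := by exact_mod_cast hω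
    simp only [Set.mem_ofPred_eq]
    linarith
  · congr 1
    field_simp

theorem stmt_17_general {Ω : Type*} [MeasurableSpace Ω] (μ : Measure Ω) [IsProbabilityMeasure μ]
    (n : ℕ) (L r mD : ℝ) (hL : 0 < L) (hLr : L * r ≤ 1/2)
    (D : Measure ℝ) [IsProbabilityMeasure D]
    (hmed1 : (1:ENNReal)/2 ≤ D (Set.Iic mD)) (hmed2 : (1:ENNReal)/2 ≤ D (Set.Ici mD))
    (hdens : ∀ S : Set ℝ, MeasurableSet S → S ⊆ Set.Icc (mD - r) (mD + r) →
      ENNReal.ofReal L * volume S ≤ D S)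
    (X : Fin n → Ω → ℝ) (hmeas : ∀ i, Measurable (X i))
    (hindep : iIndepFun X μ)
    (hlaw : ∀ i, μ.map (X i) = D)
    (t : ℝ) (ht0 : 0 ≤ t) (htr : t ≤ r) :
    μ {ω | t ≤ |leftMedian (fun i => X i ω) - mD|}
      ≤ ENNReal.ofReal (2 * Real.exp (-(n * L^2 * t^2) / 2)) := by
  set ε := L * t
  have hε : ε ≤ 1 / 2 := (mul_le_mul_of_nonneg_left htr hL.le).trans hLr
  rw [show (n : ℝ) * L ^ 2 * t ^ 2 = n * ε ^ 2 by ring]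
  rcases lt_or_ge ((n : ℝ) * ε) 1 with hsmall | hlarge
  · refine prob_le_one.trans (ENNReal.one_le_ofReal.2 ?_)
    have : n * ε ^ 2 ≤ 1 / 2 := by
      nlinarith [mul_nonneg (Nat.cast_nonneg n) (mul_nonneg hL.le ht0)]
    linarith [add_one_le_exp (-(n * ε ^ 2) / 2)]
  have hn : 2 ≤ n := by exact_mod_cast (show (2 : ℝ) ≤ n by nlinarith)
  have ht : 0 < t :=
    pos_of_mul_pos_right (pos_of_mul_pos_right (by linarith) n.cast_nonneg) hL.le
  have hevent : {ω | t ≤ |leftMedian (fun i => X i ω) - mD|}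
      ⊆ {ω | n / 2 ≤ #{i | X i ω ∈ Set.Iic (mD - t)}}
        ∪ {ω | n / 2 ≤ #{i | X i ω ∈ Set.Ici (mD + t)}} :=
    fun ω hω => half_le_card_of_le_abs_leftMedian_sub _ hn hω
  rw [← ofReal_measureReal]
  refine ENNReal.ofReal_le_ofReal ?_
  calc _ ≤ _ := (measureReal_mono hevent).trans (measureReal_union_le _ _)
    _ ≤ exp (-(n * ε ^ 2) / 2) + exp (-(n * ε ^ 2) / 2) :=
      add_le_add
        (measureReal_half_le_card_le hmeas hindep hlaw measurableSet_Iic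
          (measureReal_Iic_sub_le hL.le hdens hmed2 ht htr) hlarge)
        (measureReal_half_le_card_le hmeas hindep hlaw measurableSet_Ici
          (measureReal_Ici_add_le hL.le hdens hmed1 ht htr) hlarge)
    _ = 2 * exp (-(n * ε ^ 2) / 2) := by ring

theorem stmt_17 {Ω : Type*} [MeasurableSpace Ω] (μ : Measure Ω) [IsProbabilityMeasure μ]
    (n : ℕ) (L r mD : ℝ) (hL : 0 < L) (hr : 0 < r) (hLr : L * r ≤ 1/2)
    (D : Measure ℝ) [IsProbabilityMeasure D]
    (hmed1 : (1:ENNReal)/2 ≤ D (Set.Iic mD)) (hmed2 : (1:ENNReal)/2 ≤ D (Set.Ici mD))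
    (huniq : ∀ m' : ℝ, (1:ENNReal)/2 ≤ D (Set.Iic m') → (1:ENNReal)/2 ≤ D (Set.Ici m') →
      m' = mD)
    (hdens : ∀ S : Set ℝ, MeasurableSet S → S ⊆ Set.Icc (mD - r) (mD + r) →
      ENNReal.ofReal L * volume S ≤ D S)
    (X : Fin n → Ω → ℝ) (hmeas : ∀ i, Measurable (X i))
    (hindep : iIndepFun X μ)
    (hlaw : ∀ i, μ.map (X i) = D)
    (t : ℝ) (ht0 : 0 ≤ t) (htr : t ≤ r) :
    μ {ω | t ≤ |leftMedian (fun i => X i ω) - mD|}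
      ≤ ENNReal.ofReal (2 * Real.exp (-(n * L^2 * t^2) / 2)) :=
  stmt_17_general μ n L r mD hL hLr D hmed1 hmed2 hdens X hmeas hindep hlaw t ht0 htr
end
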